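/- For every simple regular expression E over an alphabet α and every symbol a ∈ α, the union of the languages of the Antimirov partial derivatives of E with respect to a equals the left quotient of L(E) by a: ⋃_{F ∈ ∂ₐ(E)} L(F) = a⁻¹(L(E)). -/

import Mathlib

open scoped Classical

/-- The Antimirov partial derivative of a regular expression with respect to a symbol. -/
noncomputable def aderiv {α : Type*} (a : α) : RegularExpression α → Set (RegularExpression α)
  | .zero => ∅
  | .epsilon => ∅
  | .char b => if b = a then {1} else ∅
  | .plus E₁ E₂ => aderiv a E₁ ∪ aderiv a E₂
  | .comp E₁ E₂ =>
      if [] ∈ E₁.matches' then ((· * E₂) '' aderiv a E₁) ∪ aderiv a E₂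
      else (· * E₂) '' aderiv a E₁
  | .star E₁ => (· * E₁.star) '' aderiv a E₁

/-- Iterated Antimirov partial derivative with respect to a word. -/
noncomputable def aderivWord {α : Type*} : List α → RegularExpression α → Set (RegularExpression α)
  | [], E => {E}
  | a :: w, E => ⋃ F ∈ aderiv a E, aderivWord w F

/-- Left quotient of a language by a word. -/
def lquot {α : Type*} (w : List α) (L : Language α) : Language α := {v | w ++ v ∈ L}

/-! Antimirov's partial derivatives split Brzozowski's derivative into a set of summands: by
structural induction, the union of the languages of `aderiv a E` is the language of `E.deriv a`,
the only non-trivial point being that concatenation distributes over unions. Correctness of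
Mathlib's matcher `rmatch`, which consumes a letter by taking `deriv`, then says that `E.deriv a`
matches exactly `a⁻¹ L(E)`. -/

namespace RegularExpression

variable {α : Type*}

theorem matchEpsilon_iff_nil_mem (P : RegularExpression α) :
    P.matchEpsilon ↔ [] ∈ P.matches' := by
  rw [← rmatch_iff_matches']; rfl

theorem matches'_deriv [DecidableEq α] (P : RegularExpression α) (a : α) :
    (P.deriv a).matches' = lquot [a] P.matches' := by
  ext v
  change _ ↔ a :: v ∈ P.matches'
  rw [← rmatch_iff_matches', ← rmatch_iff_matches']
  rfl

def setMatches (S : Set (RegularExpression α)) : Language α :=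
  ⨆ P ∈ S, P.matches'

@[simp]
theorem setMatches_empty : setMatches (∅ : Set (RegularExpression α)) = 0 :=
  iSup_emptyset

@[simp]
theorem setMatches_singleton (P : RegularExpression α) : setMatches {P} = P.matches' :=
  iSup_singleton

@[simp]
theorem setMatches_union (S T : Set (RegularExpression α)) :
    setMatches (S ∪ T) = setMatches S + setMatches T :=
  iSup_union

@[simp]
theorem setMatches_image_mul (S : Set (RegularExpression α)) (Q : RegularExpression α) :
    setMatches ((· * Q) '' S) = setMatches S * Q.matches' := by
  simp only [setMatches, iSup_image, matches'_mul, Language.iSup_mul]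

theorem setMatches_aderiv (a : α) (P : RegularExpression α) :
    setMatches (aderiv a P) = (P.deriv a).matches' := by
  induction P with
  | zero | epsilon => simp [aderiv]
  | char b =>
    by_cases h : b = a
    · subst h; simp [aderiv]
    · simp [aderiv, h]
  | plus P Q ihP ihQ => simp [aderiv, ihP, ihQ, matches'_add]
  | comp P Q ihP ihQ =>
    simp only [aderiv, ← matchEpsilon_iff_nil_mem]
    split_ifs with h <;> simp [deriv, h, ihP, ihQ, matches'_add, matches'_mul]
  | star P ih => simp [aderiv, ih, matches'_mul]

end RegularExpression

theorem antimirov_deriv_lang {α : Type*} (a : α) (E : RegularExpression α) :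
    ⋃ F ∈ aderiv a E, F.matches' = lquot [a] E.matches' := by
  rw [← RegularExpression.matches'_deriv]
  exact RegularExpression.setMatches_aderiv a E
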